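/- Let H be a separable real Hilbert space, B₁ and B₂ bounded linear operators on H, a ∈ H, q₀ > 0, μ a finite Borel measure on H, and ρ : H → ℂ Borel measurable with ∫_H k(q₀; w) |ρ(w)| dμ(w) < ∞. Let q₁, q₂ be real numbers with |q₁| > q₀ and |q₂| > q₀. Then ∫_H |ψ(λ₁, λ₂; w) − ψ(−iq₁, −iq₂; w)| · |ρ(w)| dμ(w) → 0 as (λ₁, λ₂) → (−iq₁, −iq₂) through points with Re(λ₁) > 0 and Re(λ₂) > 0. -/

import Mathlib

open MeasureTheory
open scoped RealInnerProductSpace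

/-- The function `ψ(λ₁, λ₂; w)` of equation (3.8) of the paper, with `Bⱼ` playing
the role of `Aⱼ^{1/2}`. -/
noncomputable def psi {H : Type*} [NormedAddCommGroup H] [InnerProductSpace ℝ H]
    (B₁ B₂ : H →L[ℝ] H) (a : H) (l₁ l₂ : ℂ) (w : H) : ℂ :=
  Complex.exp
    ((-((‖B₁ w‖ : ℂ) ^ 2) / (2 * l₁)
        + Complex.I * l₁ ^ (-(1 : ℂ) / 2) * ((⟪B₁ w, a⟫ : ℝ) : ℂ))
      + (-((‖B₂ w‖ : ℂ) ^ 2) / (2 * l₂)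
        + Complex.I * l₂ ^ (-(1 : ℂ) / 2) * ((⟪B₂ w, a⟫ : ℝ) : ℂ)))

/-- The dominating function `k(q₀; w)` of equation (3.10) of the paper. -/
noncomputable def kfun {H : Type*} [NormedAddCommGroup H] [InnerProductSpace ℝ H]
    (B₁ B₂ : H →L[ℝ] H) (a : H) (q₀ : ℝ) (w : H) : ℝ :=
  Real.exp ((2 * q₀) ^ (-(1 : ℝ) / 2) * ‖B₁‖ * ‖w‖ * ‖a‖
    + (2 * q₀) ^ (-(1 : ℝ) / 2) * ‖B₂‖ * ‖w‖ * ‖a‖)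

/-!
Dominated convergence with dominating function `2 k(q₀; ·) |ρ|`. For `Re λ ≥ 0` the Gaussian factor
`exp(-‖B w‖² / (2λ))` has modulus at most `1`, and `z = λ^{-1/2}` satisfies `z² = λ⁻¹`, so
`(Re z)² - (Im z)² = Re λ⁻¹ ≥ 0` and hence `2 (Im z)² ≤ ‖z‖² = ‖λ‖⁻¹`. Thus
`|ψ(λ₁, λ₂; ·)| ≤ k(q₀; ·)` as soon as `‖λⱼ‖ ≥ q₀`, which holds near `(-iq₁, -iq₂)` since
`|qⱼ| > q₀`. These limit points lie in the slit plane, where `λ ↦ λ^{-1/2}` is continuous, so `ψ`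
converges pointwise.
-/

open Complex Filter Topology

theorem tendsto_integral_norm_sub_mul_of_dominated {ι α E F : Type*} [MeasurableSpace α]
    [NormedAddCommGroup E] [NormedAddCommGroup F] {μ : Measure α} {l : Filter ι}
    [l.IsCountablyGenerated] {G : ι → α → E} {g : α → E} {bound : α → ℝ} {ρ : α → F}
    (hG_meas : ∀ᶠ i in l, AEStronglyMeasurable (G i) μ) (hg_meas : AEStronglyMeasurable g μ)
    (hρ : AEStronglyMeasurable ρ μ) (hG_le : ∀ᶠ i in l, ∀ᵐ x ∂μ, ‖G i x‖ ≤ bound x)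
    (hg_le : ∀ᵐ x ∂μ, ‖g x‖ ≤ bound x) (h_int : Integrable (fun x => bound x * ‖ρ x‖) μ)
    (h_lim : ∀ᵐ x ∂μ, Tendsto (fun i => G i x) l (𝓝 (g x))) :
    Tendsto (fun i => ∫ x, ‖G i x - g x‖ * ‖ρ x‖ ∂μ) l (𝓝 0) := by
  have h_dom : ∀ᶠ i in l, ∀ᵐ x ∂μ, ‖‖G i x - g x‖ * ‖ρ x‖‖ ≤ 2 * (bound x * ‖ρ x‖) := by
    filter_upwards [hG_le] with i hi
    filter_upwards [hi, hg_le] with x hGx hgx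
    rw [norm_mul, norm_norm, norm_norm, ← mul_assoc, two_mul]
    gcongr
    exact (norm_sub_le _ _).trans (add_le_add hGx hgx)
  have h_meas : ∀ᶠ i in l, AEStronglyMeasurable (fun x => ‖G i x - g x‖ * ‖ρ x‖) μ := by
    filter_upwards [hG_meas] with i hi
    exact (hi.sub hg_meas).norm.mul hρ.norm
  have h_lim' : ∀ᵐ x ∂μ, Tendsto (fun i => ‖G i x - g x‖ * ‖ρ x‖) l (𝓝 0) := by
    filter_upwards [h_lim] with x hx
    simpa using (tendsto_iff_norm_sub_tendsto_zero.1 hx).mul_const ‖ρ x‖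
  simpa using tendsto_integral_filter_of_dominated_convergence _ h_meas h_dom
    (h_int.const_mul 2) h_lim'

theorem im_cpow_neg_half_sq_le {l : ℂ} (hl : 0 ≤ l.re) :
    (l ^ (-(1 : ℂ) / 2)).im ^ 2 ≤ (2 * ‖l‖)⁻¹ := by
  set z := l ^ (-(1 : ℂ) / 2)
  have hz : z ^ 2 = l⁻¹ := by
    rw [← cpow_nat_mul, ← cpow_neg_one]; norm_num
  have hre : 0 ≤ z.re ^ 2 - z.im ^ 2 := by
    have : 0 ≤ (z ^ 2).re := by rw [hz, inv_re]; exact div_nonneg hl (normSq_nonneg l)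
    simpa [sq] using this
  have hnorm : z.re ^ 2 + z.im ^ 2 = ‖l‖⁻¹ := by
    rw [← norm_inv, ← hz, norm_pow, Complex.sq_norm, normSq_apply]; ring
  rw [mul_inv]
  linarith

theorem abs_im_cpow_neg_half_le {l : ℂ} (hl : 0 ≤ l.re) {q₀ : ℝ} (hq₀ : 0 < q₀)
    (hq : q₀ ≤ ‖l‖) : |(l ^ (-(1 : ℂ) / 2)).im| ≤ (2 * q₀) ^ (-(1 : ℝ) / 2) :=
  calc |(l ^ (-(1 : ℂ) / 2)).im| ≤ √(2 * ‖l‖)⁻¹ := Real.abs_le_sqrt (im_cpow_neg_half_sq_le hl)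
    _ ≤ √(2 * q₀)⁻¹ := by gcongr
    _ = (2 * q₀) ^ (-(1 : ℝ) / 2) := by
      rw [neg_div, Real.rpow_neg (by positivity), Real.sqrt_inv, Real.sqrt_eq_rpow]

theorem re_neg_sq_div_nonpos (x : ℝ) {l : ℂ} (hl : 0 ≤ l.re) :
    (-((x : ℂ) ^ 2) / (2 * l)).re ≤ 0 := by
  rw [div_eq_mul_inv, ← ofReal_pow, ← ofReal_neg, re_ofReal_mul, inv_re]
  exact mul_nonpos_of_nonpos_of_nonneg (neg_nonpos.2 (sq_nonneg x))
    (div_nonneg (by simpa) (normSq_nonneg _))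

section Psi

variable {H : Type*} [NormedAddCommGroup H] [InnerProductSpace ℝ H]

theorem re_psi_exponent_le (B : H →L[ℝ] H) (a w : H) {l : ℂ} (hl : 0 ≤ l.re) {q₀ : ℝ}
    (hq₀ : 0 < q₀) (hq : q₀ ≤ ‖l‖) :
    (-((‖B w‖ : ℂ) ^ 2) / (2 * l) + I * l ^ (-(1 : ℂ) / 2) * ((⟪B w, a⟫ : ℝ) : ℂ)).re
      ≤ (2 * q₀) ^ (-(1 : ℝ) / 2) * ‖B‖ * ‖w‖ * ‖a‖ := by
  have hinner : |⟪B w, a⟫| ≤ ‖B‖ * ‖w‖ * ‖a‖ :=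
    (abs_real_inner_le_norm _ _).trans (by gcongr; exact B.le_opNorm w)
  have him : (I * l ^ (-(1 : ℂ) / 2) * ((⟪B w, a⟫ : ℝ) : ℂ)).re
      = -(l ^ (-(1 : ℂ) / 2)).im * ⟪B w, a⟫ := by
    simp [mul_re]
  rw [add_re, him]
  calc _ ≤ 0 + |(l ^ (-(1 : ℂ) / 2)).im| * |⟪B w, a⟫| := by
        refine add_le_add (re_neg_sq_div_nonpos _ hl) ?_
        rw [← abs_mul, neg_mul]; exact neg_le_abs _
    _ ≤ (2 * q₀) ^ (-(1 : ℝ) / 2) * (‖B‖ * ‖w‖ * ‖a‖) := by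
        rw [zero_add]
        exact mul_le_mul (abs_im_cpow_neg_half_le hl hq₀ hq) hinner (abs_nonneg _) (by positivity)
    _ = _ := by ring

theorem norm_psi_le_kfun (B₁ B₂ : H →L[ℝ] H) (a : H) {q₀ : ℝ} (hq₀ : 0 < q₀) {l₁ l₂ : ℂ}
    (h₁ : 0 ≤ l₁.re) (hq₁ : q₀ ≤ ‖l₁‖) (h₂ : 0 ≤ l₂.re) (hq₂ : q₀ ≤ ‖l₂‖) (w : H) :
    ‖psi B₁ B₂ a l₁ l₂ w‖ ≤ kfun B₁ B₂ a q₀ w := by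
  rw [psi, kfun, norm_exp, Real.exp_le_exp, add_re]
  exact add_le_add (re_psi_exponent_le B₁ a w h₁ hq₀ hq₁) (re_psi_exponent_le B₂ a w h₂ hq₀ hq₂)

theorem continuous_psi (B₁ B₂ : H →L[ℝ] H) (a : H) (l₁ l₂ : ℂ) :
    Continuous (psi B₁ B₂ a l₁ l₂) := by
  unfold psi; fun_prop

theorem continuousAt_psi (B₁ B₂ : H →L[ℝ] H) (a w : H) {l₁ l₂ : ℂ} (h₁ : l₁ ∈ slitPlane)
    (h₂ : l₂ ∈ slitPlane) :
    ContinuousAt (fun p : ℂ × ℂ => psi B₁ B₂ a p.1 p.2 w) (l₁, l₂) := by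
  have := slitPlane_ne_zero h₁
  have := slitPlane_ne_zero h₂
  unfold psi; fun_prop (disch := first | assumption | simpa)

end Psi

theorem stmt12_general {H : Type*} [NormedAddCommGroup H] [InnerProductSpace ℝ H]
    [MeasurableSpace H] [BorelSpace H]
    (B₁ B₂ : H →L[ℝ] H) (a : H) (q₀ : ℝ) (hq₀ : 0 < q₀)
    (μ : Measure H)
    (ρ : H → ℂ) (hρ : Measurable ρ)
    (hk : Integrable (fun w => kfun B₁ B₂ a q₀ w * ‖ρ w‖) μ)
    (q₁ q₂ : ℝ) (hq₁ : q₀ < |q₁|) (hq₂ : q₀ < |q₂|) :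
    Filter.Tendsto
      (fun p : ℂ × ℂ => ∫ w,
        ‖psi B₁ B₂ a p.1 p.2 w
            - psi B₁ B₂ a (-Complex.I * q₁) (-Complex.I * q₂) w‖
          * ‖ρ w‖ ∂μ)
      (nhdsWithin (-Complex.I * q₁, -Complex.I * q₂)
        {p : ℂ × ℂ | 0 < p.1.re ∧ 0 < p.2.re})
      (nhds 0) := by
  have hlimit (q : ℝ) (hq : q₀ < |q|) : (-I * q).re = 0 ∧ q₀ < ‖-I * q‖ ∧ -I * q ∈ slitPlane := by
    have hq' : q ≠ 0 := abs_pos.1 (hq₀.trans hq)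
    exact ⟨by simp, by simpa using hq, mem_slitPlane_iff.2 (.inr (by simpa using hq'))⟩
  obtain ⟨hre₁, hnorm₁, hslit₁⟩ := hlimit q₁ hq₁
  obtain ⟨hre₂, hnorm₂, hslit₂⟩ := hlimit q₂ hq₂
  have hnear : ∀ᶠ p : ℂ × ℂ in 𝓝[{p | 0 < p.1.re ∧ 0 < p.2.re}] (-I * q₁, -I * q₂),
      (0 < p.1.re ∧ 0 < p.2.re) ∧ q₀ < ‖p.1‖ ∧ q₀ < ‖p.2‖ :=
    eventually_mem_nhdsWithin.and <| nhdsWithin_le_nhds <|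
      ((continuous_fst.norm.tendsto _).eventually_const_lt hnorm₁).and
        ((continuous_snd.norm.tendsto _).eventually_const_lt hnorm₂)
  refine tendsto_integral_norm_sub_mul_of_dominated (bound := kfun B₁ B₂ a q₀)
    (.of_forall fun p => (continuous_psi ..).aestronglyMeasurable)
    (continuous_psi ..).aestronglyMeasurable hρ.aestronglyMeasurable ?_
    (.of_forall (norm_psi_le_kfun B₁ B₂ a hq₀ hre₁.ge hnorm₁.le hre₂.ge hnorm₂.le)) hk
    (.of_forall fun w => (continuousAt_psi B₁ B₂ a w hslit₁ hslit₂).continuousWithinAt)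
  filter_upwards [hnear] with p ⟨⟨h₁, h₂⟩, hq₁', hq₂'⟩
  exact .of_forall (norm_psi_le_kfun B₁ B₂ a hq₀ h₁.le hq₁'.le h₂.le hq₂'.le)

/-- The dominated-convergence estimate at the core of Theorem 3.2:
`∫_H |ψ(λ₁, λ₂; w) − ψ(−iq₁, −iq₂; w)| |ρ(w)| dμ(w) → 0` as
`(λ₁, λ₂) → (−iq₁, −iq₂)` through points with positive real parts. -/
theorem stmt12 {H : Type*} [NormedAddCommGroup H] [InnerProductSpace ℝ H]
    [TopologicalSpace.SeparableSpace H] [MeasurableSpace H] [BorelSpace H]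
    (B₁ B₂ : H →L[ℝ] H) (a : H) (q₀ : ℝ) (hq₀ : 0 < q₀)
    (μ : Measure H) [IsFiniteMeasure μ]
    (ρ : H → ℂ) (hρ : Measurable ρ)
    (hk : Integrable (fun w => kfun B₁ B₂ a q₀ w * ‖ρ w‖) μ)
    (q₁ q₂ : ℝ) (hq₁ : q₀ < |q₁|) (hq₂ : q₀ < |q₂|) :
    Filter.Tendsto
      (fun p : ℂ × ℂ => ∫ w,
        ‖psi B₁ B₂ a p.1 p.2 w
            - psi B₁ B₂ a (-Complex.I * q₁) (-Complex.I * q₂) w‖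
          * ‖ρ w‖ ∂μ)
      (nhdsWithin (-Complex.I * q₁, -Complex.I * q₂)
        {p : ℂ × ℂ | 0 < p.1.re ∧ 0 < p.2.re})
      (nhds 0) :=
  stmt12_general B₁ B₂ a q₀ hq₀ μ ρ hρ hk q₁ q₂ hq₁ hq₂
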